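/- The Tanny polynomials F_n(q) = Σ_{k=0}^n k!·S(n,k)·q^k, where S(n,k) are the Stirling numbers of the second kind, are strongly q-log-convex: for all n ≥ m ≥ 1, the polynomial F_{m-1}(q)·F_{n+1}(q) − F_m(q)·F_n(q) has only nonnegative coefficients. -/

import Mathlib

open Polynomial

/-- The Stirling numbers of the second kind: `S(0,0) = 1`, `S(n,k) = 0` for `k > n`,
and `S(n,k) = k·S(n-1,k) + S(n-1,k-1)` for `n, k ≥ 1`. -/
def stirling2 : ℕ → ℕ → ℕ
  | 0, 0 => 1
  | 0, _ + 1 => 0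
  | _ + 1, 0 => 0
  | n + 1, k + 1 => (k + 1) * stirling2 n (k + 1) + stirling2 n k

/-- The Tanny polynomial `F_n(q) = Σ_{k=0}^n k!·S(n,k)·q^k`. -/
noncomputable def tannyPoly (n : ℕ) : Polynomial ℝ :=
  ∑ k ∈ Finset.range (n + 1), C ((Nat.factorial k * stirling2 n k : ℕ) : ℝ) * X ^ k

/-!
With `θ = q d/dq`, the recurrence for `S(n,k)` reads `F_{n+1} = θ((1+q) F_n)`. Since `θ` is a
derivation, `F_{m-1} F_{n+1} - F_m F_n = (1+q) (F_{m-1} θF_n - θF_{m-1} F_n)`, and the coefficient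
of `q^N` in the second factor is `∑_{i+j=N} (j-i) a_i b_j` with `a_i`, `b_j` the coefficients of
`F_{m-1}`, `F_n`. Pairing `(i,j)` with `(j,i)` turns it into a sum of terms
`(j-i)(a_i b_j - a_j b_i)`, which are nonnegative because the Stirling triangle is totally
positive of order two.
-/

open Finset

namespace Nat

theorem stirlingSecond_mul_le_mul {n m j k : ℕ} (hnm : n ≤ m) (hjk : j ≤ k) :
    stirlingSecond n k * stirlingSecond m j ≤ stirlingSecond n j * stirlingSecond m k := by
  induction n generalizing m j k with
  | zero =>
    rcases k with _ | k
    · obtain rfl : j = 0 := by omega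
      rfl
    · simp
  | succ n ih =>
    obtain ⟨m, rfl⟩ := Nat.exists_eq_add_of_le' (show 1 ≤ m by omega)
    rcases hjk.eq_or_lt with rfl | hjk
    · rfl
    obtain ⟨k, rfl⟩ := Nat.exists_eq_add_of_le' (show 1 ≤ k by omega)
    rcases j with _ | j
    · simp
    have hnm : n ≤ m := by omega
    -- each of the four products in the expanded minor is a minor of the previous row pair
    rw [stirlingSecond_succ_succ n k, stirlingSecond_succ_succ n j,
      stirlingSecond_succ_succ m k, stirlingSecond_succ_succ m j]
    linear_combination (k + 1) * (j + 1) * ih hnm (show j + 1 ≤ k + 1 by omega) +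
      (k + 1) * ih hnm (show j ≤ k + 1 by omega) + (j + 1) * ih hnm (show j + 1 ≤ k by omega) +
      ih hnm (show j ≤ k by omega)

end Nat

theorem stirling2_eq_stirlingSecond : stirling2 = Nat.stirlingSecond := by
  funext n k
  induction n generalizing k with
  | zero => cases k <;> rfl
  | succ n ih =>
    cases k with
    | zero => rfl
    | succ k => rw [Nat.stirlingSecond_succ_succ, ← ih, ← ih]; rfl

namespace Polynomial

theorem coeff_mul_nonneg {R : Type*} [Semiring R] [PartialOrder R] [IsOrderedRing R]
    {p q : R[X]} (hp : ∀ n, 0 ≤ p.coeff n) (hq : ∀ n, 0 ≤ q.coeff n) (n : ℕ) :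
    0 ≤ (p * q).coeff n := by
  rw [coeff_mul]
  exact sum_nonneg fun x _ => mul_nonneg (hp _) (hq _)

theorem coeff_one_add_X_nonneg {R : Type*} [Semiring R] [PartialOrder R] [IsOrderedRing R]
    (n : ℕ) : 0 ≤ (1 + X : R[X]).coeff n := by
  rw [coeff_add, coeff_one, coeff_X]
  exact add_nonneg (by split_ifs <;> simp) (by split_ifs <;> simp)

variable {R : Type*} [CommRing R]

theorem coeff_X_mul_derivative (p : R[X]) (n : ℕ) :
    (X * derivative p).coeff n = n * p.coeff n := by
  rcases n with _ | n
  · simp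
  · rw [coeff_X_mul, coeff_derivative]
    push_cast
    ring

theorem mul_X_mul_derivative_sub_of_mul (u f g : R[X]) :
    f * (X * derivative (u * g)) - X * derivative (u * f) * g =
      u * (f * (X * derivative g) - X * derivative f * g) := by
  simp only [derivative_mul]
  ring

theorem coeff_mul_X_mul_derivative_sub (f g : R[X]) (N : ℕ) :
    (f * (X * derivative g) - X * derivative f * g).coeff N =
      ∑ x ∈ antidiagonal N, ((x.2 : R) - x.1) * (f.coeff x.1 * g.coeff x.2) := by
  rw [coeff_sub, coeff_mul, coeff_mul, ← sum_sub_distrib]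
  simp only [coeff_X_mul_derivative]
  exact sum_congr rfl fun x _ => by ring

theorem coeff_mul_X_mul_derivative_sub_nonneg [LinearOrder R] [IsStrictOrderedRing R]
    {f g : R[X]} (hfg : ∀ i j, i ≤ j → f.coeff j * g.coeff i ≤ f.coeff i * g.coeff j)
    (N : ℕ) : 0 ≤ (f * (X * derivative g) - X * derivative f * g).coeff N := by
  rw [coeff_mul_X_mul_derivative_sub]
  set S := ∑ x ∈ antidiagonal N, ((x.2 : R) - x.1) * (f.coeff x.1 * g.coeff x.2)
  have hswap : S = ∑ x ∈ antidiagonal N, ((x.1 : R) - x.2) * (f.coeff x.2 * g.coeff x.1) :=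
    (Nat.sum_antidiagonal_swap (f := fun x : ℕ × ℕ =>
      ((x.2 : R) - x.1) * (f.coeff x.1 * g.coeff x.2))).symm
  have hpaired : 0 ≤ S + S := by
    nth_rw 2 [hswap]
    rw [← sum_add_distrib]
    refine sum_nonneg fun x _ => ?_
    rw [show ((x.2 : R) - x.1) * (f.coeff x.1 * g.coeff x.2) +
        ((x.1 : R) - x.2) * (f.coeff x.2 * g.coeff x.1) =
        ((x.2 : R) - x.1) * (f.coeff x.1 * g.coeff x.2 - f.coeff x.2 * g.coeff x.1) by ring]
    rcases le_total x.1 x.2 with hx | hx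
    · exact mul_nonneg (sub_nonneg.2 (by exact_mod_cast hx)) (sub_nonneg.2 (hfg _ _ hx))
    · exact mul_nonneg_of_nonpos_of_nonpos (sub_nonpos.2 (by exact_mod_cast hx))
        (sub_nonpos.2 (hfg _ _ hx))
  linarith

end Polynomial

theorem tannyPoly_coeff (n k : ℕ) :
    (tannyPoly n).coeff k = k.factorial * Nat.stirlingSecond n k := by
  rw [tannyPoly, finsetSum_coeff]
  simp only [coeff_C_mul, coeff_X_pow, mul_ite, mul_one, mul_zero, sum_ite_eq, mem_range,
    stirling2_eq_stirlingSecond]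
  split_ifs with h
  · push_cast
    rfl
  · simp [Nat.stirlingSecond_eq_zero_of_lt (show n < k by omega)]

theorem tannyPoly_succ (n : ℕ) : tannyPoly (n + 1) = X * derivative ((1 + X) * tannyPoly n) := by
  ext k
  rw [coeff_X_mul_derivative]
  rcases k with _ | k
  · simp [tannyPoly_coeff]
  · rw [add_mul, one_mul, coeff_add, coeff_X_mul, tannyPoly_coeff, tannyPoly_coeff,
      tannyPoly_coeff, Nat.stirlingSecond_succ_succ, Nat.factorial_succ]
    push_cast
    ring

theorem tannyPoly_coeff_mul_le {n m j k : ℕ} (hnm : n ≤ m) (hjk : j ≤ k) :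
    (tannyPoly n).coeff k * (tannyPoly m).coeff j ≤
      (tannyPoly n).coeff j * (tannyPoly m).coeff k := by
  have hS : (Nat.stirlingSecond n k * Nat.stirlingSecond m j : ℝ) ≤
      Nat.stirlingSecond n j * Nat.stirlingSecond m k := by
    exact_mod_cast Nat.stirlingSecond_mul_le_mul hnm hjk
  simp only [tannyPoly_coeff]
  calc (k.factorial * Nat.stirlingSecond n k * (j.factorial * Nat.stirlingSecond m j) : ℝ)
      = (j.factorial * k.factorial) * (Nat.stirlingSecond n k * Nat.stirlingSecond m j) := by ring
    _ ≤ (j.factorial * k.factorial) * (Nat.stirlingSecond n j * Nat.stirlingSecond m k) := by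
      gcongr
    _ = j.factorial * Nat.stirlingSecond n j * (k.factorial * Nat.stirlingSecond m k) := by ring

/-- The Tanny polynomials are strongly `q`-log-convex: for all
`n ≥ m ≥ 1`, the polynomial `F_{m-1}·F_{n+1} − F_m·F_n` has nonnegative coefficients. -/
theorem tannyPoly_strongly_q_log_convex :
    ∀ m n : ℕ, 1 ≤ m → m ≤ n →
      ∀ i : ℕ,
        0 ≤ (tannyPoly (m - 1) * tannyPoly (n + 1)
              - tannyPoly m * tannyPoly n).coeff i := by
  intro m n hm hmn i
  obtain ⟨m, rfl⟩ := Nat.exists_eq_add_of_le' hm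
  rw [Nat.add_sub_cancel, tannyPoly_succ m, tannyPoly_succ n, mul_X_mul_derivative_sub_of_mul]
  exact coeff_mul_nonneg coeff_one_add_X_nonneg
    (coeff_mul_X_mul_derivative_sub_nonneg fun _ _ => tannyPoly_coeff_mul_le (by omega)) i
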